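/- arXiv:2308.11964 — 5 statements merged into one kernel-verified Lean document; each statement's English description precedes it below -/
import Mathlib

section
/- Let ν ≥ 1/2 and 0 < B ≤ √(π/e) be real numbers, and set x₀ = π/B². If z > 0 satisfies 2z ≤ log x₀ − log log x₀ + (1/2)·(log log x₀)/(log x₀), then K_ν(z) ≥ e^{−z}·√(π/(2z)) ≥ B. (Sufficient condition on z to avoid underflow.) -/
/-!
The first inequality holds because `cosh (ν t)` increases with `ν ≥ 0`, while `K_{1/2}` is an
elementary Gaussian integral. For the second, `B ≤ exp (-z) √(π / (2z))` is equivalent to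
`2z exp (2z) ≤ x₀`, i.e. to `2z ≤ W(x₀)` for the Lambert function `W`, and the right-hand side
of the hypothesis on `z` is a classical lower bound for `W(x₀)` once `log x₀ ≥ 1`.
-/

open Real MeasureTheory

/-- Modified Bessel function of the second kind, via its integral representation. -/
noncomputable def besselK (ν z : ℝ) : ℝ :=
  ∫ t in Set.Ioi (0 : ℝ), Real.exp (-z * Real.cosh t) * Real.cosh (ν * t)

open Set Filter

namespace Real

lemma cosh_le_exp_abs (x : ℝ) : cosh x ≤ exp |x| := by
  rw [← cosh_abs, cosh_eq]
  linarith [exp_le_exp.2 (show -|x| ≤ |x| by linarith [abs_nonneg x])]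

lemma cosh_eq_two_mul_sinh_half_sq_add_one (t : ℝ) : cosh t = 2 * sinh (t / 2) ^ 2 + 1 := by
  have h := cosh_two_mul (t / 2)
  rw [mul_div_cancel₀ t two_ne_zero, cosh_sq] at h
  linarith

lemma image_sinh_half_Ioi : (fun t => sinh (t / 2)) '' Ioi 0 = Ioi 0 := by
  ext u
  constructor
  · rintro ⟨t, ht, rfl⟩
    exact sinh_pos_iff.2 (half_pos ht)
  · intro hu
    refine ⟨2 * arsinh u, mul_pos two_pos (arsinh_pos_iff.2 hu), ?_⟩
    simp only [mul_div_cancel_left₀ _ (two_ne_zero' ℝ), sinh_arsinh]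

end Real

lemma integrableOn_besselK_integrand (ν : ℝ) {z : ℝ} (hz : 0 < z) :
    IntegrableOn (fun t => exp (-z * cosh t) * cosh (ν * t)) (Ioi 0) := by
  refine integrable_of_isBigO_exp_neg one_pos (by fun_prop) (Asymptotics.isBigO_iff.2 ⟨1, ?_⟩)
  filter_upwards [eventually_ge_atTop (4 * (|ν| + 1) / z), eventually_ge_atTop 0] with t ht ht0
  -- `z cosh t ≥ z exp t / 2 ≥ z t² / 4` beats the linear growth `(|ν| + 1) t`
  have hquad : (|ν| + 1) * t ≤ z * cosh t := by
    rw [div_le_iff₀ hz] at ht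
    nlinarith [quadratic_le_exp_of_nonneg ht0, cosh_eq t, exp_pos (-t)]
  have hνt : cosh (ν * t) ≤ exp (|ν| * t) := by
    simpa [abs_mul, abs_of_nonneg ht0] using cosh_le_exp_abs (ν * t)
  rw [one_mul, norm_of_nonneg (by positivity), norm_of_nonneg (exp_pos _).le]
  calc exp (-z * cosh t) * cosh (ν * t) ≤ exp (-z * cosh t) * exp (|ν| * t) := by gcongr
    _ = exp (-z * cosh t + |ν| * t) := (exp_add _ _).symm
    _ ≤ exp (-1 * t) := exp_le_exp.2 (by linarith)

lemma besselK_mono {μ ν z : ℝ} (hμ : 0 ≤ μ) (hμν : μ ≤ ν) (hz : 0 < z) :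
    besselK μ z ≤ besselK ν z := by
  refine setIntegral_mono_on (integrableOn_besselK_integrand μ hz)
    (integrableOn_besselK_integrand ν hz) measurableSet_Ioi fun t ht => ?_
  have ht : 0 ≤ t := le_of_lt ht
  gcongr
  rw [cosh_le_cosh, abs_of_nonneg (mul_nonneg hμ ht),
    abs_of_nonneg (mul_nonneg (hμ.trans hμν) ht)]
  exact mul_le_mul_of_nonneg_right hμν ht

-- The substitution `u = sinh (t / 2)` turns the integral into a Gaussian one,
-- since `cosh t = 1 + 2 u²` and `cosh (t / 2) dt = 2 du`.
lemma besselK_one_half (z : ℝ) :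
    besselK (1 / 2) z = exp (-z) * √(π / (2 * z)) := by
  have hderiv : ∀ t ∈ Ioi (0 : ℝ),
      HasDerivWithinAt (fun t => sinh (t / 2)) (cosh (t / 2) * (1 / 2)) (Ioi 0) t := fun t _ =>
    ((hasDerivAt_id' t).div_const 2).sinh.hasDerivWithinAt
  have hinj : InjOn (fun t : ℝ => sinh (t / 2)) (Ioi 0) := fun a _ b _ h => by
    simpa using sinh_injective h
  have hsubst := integral_image_eq_integral_abs_deriv_smul measurableSet_Ioi hderiv hinj
    (fun u => 2 * exp (-z) * exp (-(2 * z) * u ^ 2))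
  rw [image_sinh_half_Ioi, integral_const_mul, integral_gaussian_Ioi] at hsubst
  rw [besselK]
  convert hsubst.symm using 1
  · refine setIntegral_congr_fun measurableSet_Ioi fun t _ => ?_
    rw [abs_of_pos (by positivity), smul_eq_mul, cosh_eq_two_mul_sinh_half_sq_add_one t,
      show -z * (2 * sinh (t / 2) ^ 2 + 1) = -z + -(2 * z) * sinh (t / 2) ^ 2 by ring,
      exp_add, show 1 / 2 * t = t / 2 by ring]
    ring
  · ring

-- `L - log L + log L / (2 L)` is the classical lower bound for the Lambert function `W (exp L)`.
lemma mul_exp_le_exp_of_le_lambertW_lowerBound {L w : ℝ} (hL : 1 ≤ L)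
    (hw : w ≤ L - log L + 1 / 2 * (log L / L)) : w * exp w ≤ exp L := by
  rcases lt_or_ge w 0 with hw0 | hw0
  · exact (mul_neg_of_neg_of_pos hw0 (exp_pos w)).le.trans (exp_pos L).le
  set a := L - log L + 1 / 2 * (log L / L) with ha_def
  clear_value a
  have hL0 : 0 < L := by linarith
  have hlog : 0 ≤ log L := log_nonneg hL
  have hlogL : log L ≤ L - 1 := log_le_sub_one_of_pos hL0
  have hfrac : log L / L ≤ log L := div_le_self hlog hL
  have hfrac' : log L / L < 1 := (div_lt_one hL0).2 (by linarith)
  have ha : 0 < a := by linarith [div_nonneg hlog hL0.le]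
  have haL : a ≤ L * (1 - 1 / 2 * (log L / L)) := by
    rw [mul_sub, mul_one, mul_left_comm, mul_div_cancel₀ _ hL0.ne']
    linarith
  have hlog_a : log a ≤ log L - 1 / 2 * (log L / L) := by
    have h1 : 0 < 1 - 1 / 2 * (log L / L) := by linarith
    calc log a ≤ log (L * (1 - 1 / 2 * (log L / L))) := log_le_log ha haL
      _ = log L + log (1 - 1 / 2 * (log L / L)) := log_mul hL0.ne' h1.ne'
      _ ≤ log L - 1 / 2 * (log L / L) := by linarith [log_le_sub_one_of_pos h1]
  calc w * exp w ≤ a * exp a := mul_le_mul hw (exp_le_exp.2 hw) (exp_pos w).le ha.le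
    _ = exp (log a + a) := by rw [exp_add, exp_log ha]
    _ ≤ exp L := exp_le_exp.2 (by linarith)

lemma le_exp_neg_mul_sqrt_of_mul_exp_le {B c z : ℝ} (hB : 0 < B) (hz : 0 < z)
    (h : 2 * z * exp (2 * z) ≤ c / B ^ 2) : B ≤ exp (-z) * √(c / (2 * z)) := by
  have hexp : exp (-z) = √(exp (2 * z))⁻¹ := by
    rw [← exp_neg, ← sqrt_sq (exp_pos (-z)).le, ← exp_nat_mul]; ring_nf
  rw [hexp, ← sqrt_mul (by positivity), le_sqrt' hB, inv_mul_eq_div, div_div,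
    le_div_iff₀ (by positivity)]
  rwa [le_div_iff₀ (by positivity), mul_comm] at h

theorem underflow_sufficient (ν B : ℝ) (hν : 1 / 2 ≤ ν) (hB : 0 < B)
    (hB' : B ≤ Real.sqrt (π / Real.exp 1))
    (x₀ : ℝ) (hx₀ : x₀ = π / B ^ 2)
    (z : ℝ) (hz : 0 < z)
    (h1 : 2 * z ≤ Real.log x₀ - Real.log (Real.log x₀) +
        (1 / 2) * (Real.log (Real.log x₀) / Real.log x₀)) :
    besselK ν z ≥ Real.exp (-z) * Real.sqrt (π / (2 * z)) ∧
      Real.exp (-z) * Real.sqrt (π / (2 * z)) ≥ B := by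
  refine ⟨besselK_one_half z ▸ besselK_mono (by norm_num) hν hz, ?_⟩
  have hx₀e : exp 1 ≤ x₀ := by
    rw [le_sqrt hB.le (by positivity), le_div_iff₀ (exp_pos 1)] at hB'
    rwa [hx₀, le_div_iff₀ (by positivity), mul_comm]
  have hx₀pos : 0 < x₀ := (exp_pos 1).trans_le hx₀e
  have hL : 1 ≤ log x₀ := (le_log_iff_exp_le hx₀pos).2 hx₀e
  refine le_exp_neg_mul_sqrt_of_mul_exp_le hB hz ?_
  rw [← hx₀, ← exp_log hx₀pos]
  exact mul_exp_le_exp_of_le_lambertW_lowerBound hL h1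
end

section
/- For every real ν ≥ e²/(2(e − 2)) and every real z with 0 < z ≤ 1, one has K_ν(z) < (ν/z)^ν. -/
open Real MeasureTheory

/-!
With `T = log (ν / z)`, so that `(ν / z) ^ ν = exp (ν T)`, the integrand is at most
`exp (ν t - z eᵗ / 2)`. On `(0, T]` drop the `z eᵗ` term; beyond `T` write
`z eᵗ = ν e^(t - T)` and use `e^s ≥ e s`, which turns the exponent into
`ν T - ν (e - 2) (t - T) / 2`. Integrating the two exponentials gives
`K_ν(z) ≤ e / ((e - 2) ν) · (ν / z) ^ ν - 1 / ν`, which is below `(ν / z) ^ ν`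
as soon as `ν ≥ e / (e - 2)`.
-/

open Set

lemma Real.cosh_le_exp_of_nonneg {x : ℝ} (hx : 0 ≤ x) : cosh x ≤ exp x := by
  rw [cosh_eq]
  linarith [exp_le_exp.2 (neg_le_self hx)]

lemma Real.exp_div_two_le_cosh (x : ℝ) : exp x / 2 ≤ cosh x := by
  rw [cosh_eq]
  linarith [exp_pos (-x)]

lemma besselK_integrand_le {ν z t : ℝ} (hz : 0 ≤ z) (hνt : 0 ≤ ν * t) :
    exp (-z * cosh t) * cosh (ν * t) ≤ exp (ν * t - z / 2 * exp t) := by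
  have hcosh : z / 2 * exp t ≤ z * cosh t := by
    nlinarith [exp_div_two_le_cosh t]
  calc exp (-z * cosh t) * cosh (ν * t)
      ≤ exp (-(z / 2 * exp t)) * exp (ν * t) := by
        gcongr
        · linarith
        · exact cosh_le_exp_of_nonneg hνt
    _ = exp (ν * t - z / 2 * exp t) := by rw [← exp_add]; ring_nf

lemma mul_sub_half_mul_exp_le {ν z T : ℝ} (t : ℝ) (hν : 0 ≤ ν) (hT : z * exp T = ν) :
    ν * t - z / 2 * exp t ≤ ν * T - ν * (exp 1 - 2) / 2 * (t - T) := by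
  have hshift : z * exp t = ν * exp (t - T) := by
    rw [← hT, mul_assoc, ← exp_add, add_sub_cancel]
  nlinarith [exp_one_mul_le_exp (x := t - T)]

lemma integral_exp_mul_Ioc {ν : ℝ} (hν : ν ≠ 0) (T : ℝ) (hT : 0 ≤ T) :
    ∫ t in Ioc 0 T, exp (ν * t) = (exp (ν * T) - 1) / ν := by
  rw [← intervalIntegral.integral_of_le hT,
    intervalIntegral.integral_comp_mul_left (fun x => exp x) hν, integral_exp, mul_zero, exp_zero,
    smul_eq_mul, div_eq_inv_mul]

lemma integral_exp_sub_mul_sub_Ioi {c : ℝ} (hc : 0 < c) (a T : ℝ) :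
    ∫ t in Ioi T, exp (a - c * (t - T)) = exp a / c := by
  have hsplit : ∀ t, exp (a - c * (t - T)) = exp (a + c * T) * exp (-c * t) := fun t => by
    rw [← exp_add]; ring_nf
  simp_rw [hsplit]
  rw [integral_const_mul, integral_exp_mul_Ioi (neg_lt_zero.2 hc), neg_div_neg_eq,
    ← mul_div_assoc, ← exp_add]
  ring_nf

lemma integrableOn_exp_sub_mul_sub_Ioi {c : ℝ} (hc : 0 < c) (a T : ℝ) :
    IntegrableOn (fun t => exp (a - c * (t - T))) (Ioi T) := by
  by_contra h
  have := integral_undef h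
  rw [integral_exp_sub_mul_sub_Ioi hc] at this
  exact (div_pos (exp_pos a) hc).ne' this

lemma setIntegral_Ioi_zero_le_of_norm_le_exp {f : ℝ → ℝ} {ν c T : ℝ} (hν : ν ≠ 0)
    (hc : 0 < c) (hT : 0 ≤ T) (hf : AEStronglyMeasurable f (volume.restrict (Ioi 0)))
    (hnear : ∀ t ∈ Ioc 0 T, ‖f t‖ ≤ exp (ν * t))
    (hfar : ∀ t ∈ Ioi T, ‖f t‖ ≤ exp (ν * T - c * (t - T))) :
    ∫ t in Ioi 0, f t ≤ (exp (ν * T) - 1) / ν + exp (ν * T) / c := by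
  have hexp_near : IntegrableOn (fun t => exp (ν * t)) (Ioc 0 T) :=
    (continuous_exp.comp (continuous_const_mul ν)).integrableOn_Ioc
  have hexp_far := integrableOn_exp_sub_mul_sub_Ioi hc (ν * T) T
  have hf_near : IntegrableOn f (Ioc 0 T) :=
    hexp_near.mono' (hf.mono_set Ioc_subset_Ioi_self)
      ((ae_restrict_iff' measurableSet_Ioc).2 (ae_of_all _ hnear))
  have hf_far : IntegrableOn f (Ioi T) :=
    hexp_far.mono' (hf.mono_set (Ioi_subset_Ioi hT))
      ((ae_restrict_iff' measurableSet_Ioi).2 (ae_of_all _ hfar))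
  rw [← Ioc_union_Ioi_eq_Ioi hT,
    setIntegral_union (Ioc_disjoint_Ioi le_rfl) measurableSet_Ioi hf_near hf_far,
    ← integral_exp_mul_Ioc hν T hT, ← integral_exp_sub_mul_sub_Ioi hc (ν * T) T]
  gcongr ?_ + ?_
  · exact setIntegral_mono_on hf_near hexp_near measurableSet_Ioc
      fun t ht => (le_abs_self _).trans (hnear t ht)
  · exact setIntegral_mono_on hf_far hexp_far measurableSet_Ioi
      fun t ht => (le_abs_self _).trans (hfar t ht)

theorem besselK_le {ν z : ℝ} (hz : 0 < z) (hzν : z ≤ ν) :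
    besselK ν z ≤ exp 1 / ((exp 1 - 2) * ν) * (ν / z) ^ ν - 1 / ν := by
  have hν : 0 < ν := hz.trans_le hzν
  have he : 0 < exp 1 - 2 := by linarith [exp_one_gt_d9]
  set T := log (ν / z)
  have hT : 0 ≤ T := log_nonneg ((one_le_div hz).2 hzν)
  have hzT : z * exp T = ν := by rw [exp_log (div_pos hν hz)]; field_simp
  have hint_le : ∀ t ∈ Ioi (0 : ℝ),
      ‖exp (-z * cosh t) * cosh (ν * t)‖ ≤ exp (ν * t - z / 2 * exp t) := fun t ht => by
    rw [norm_of_nonneg (by positivity)]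
    exact besselK_integrand_le hz.le (mul_nonneg hν.le (le_of_lt ht))
  have hbound := setIntegral_Ioi_zero_le_of_norm_le_exp
    (f := fun t => exp (-z * cosh t) * cosh (ν * t)) (c := ν * (exp 1 - 2) / 2) hν.ne'
    (by positivity) hT (Continuous.aestronglyMeasurable (by fun_prop))
    (fun t ht => (hint_le t ht.1).trans (exp_le_exp.2 (by nlinarith [exp_pos t])))
    (fun t ht => (hint_le t (hT.trans_lt ht)).trans
      (exp_le_exp.2 (mul_sub_half_mul_exp_le t hν.le hzT)))
  rw [besselK, rpow_def_of_pos (div_pos hν hz), mul_comm]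
  refine hbound.trans_eq ?_
  field_simp
  ring

theorem besselK_lt_rpow {ν z : ℝ} (hν : exp 1 / (exp 1 - 2) ≤ ν) (hz : 0 < z)
    (hzν : z ≤ ν) : besselK ν z < (ν / z) ^ ν := by
  have hν0 : 0 < ν := hz.trans_le hzν
  have he : 0 < exp 1 - 2 := by linarith [exp_one_gt_d9]
  have hcoeff : exp 1 / ((exp 1 - 2) * ν) ≤ 1 := by
    rw [div_le_one (by positivity)]
    rwa [div_le_iff₀ he, mul_comm] at hν
  have hpow : 0 < (ν / z) ^ ν := rpow_pos_of_pos (div_pos hν0 hz) ν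
  calc besselK ν z ≤ exp 1 / ((exp 1 - 2) * ν) * (ν / z) ^ ν - 1 / ν := besselK_le hz hzν
    _ < (ν / z) ^ ν := by nlinarith [one_div_pos.2 hν0]

theorem besselK_lt_pow (ν z : ℝ)
    (hν : Real.exp 1 ^ 2 / (2 * (Real.exp 1 - 2)) ≤ ν)
    (hz : 0 < z) (hz' : z ≤ 1) :
    besselK ν z < (ν / z) ^ ν := by
  have he2 : 2 ≤ exp 1 := by linarith [exp_one_gt_d9]
  have he : 0 < exp 1 - 2 := by linarith [exp_one_gt_d9]
  have hthreshold : exp 1 / (exp 1 - 2) ≤ exp 1 ^ 2 / (2 * (exp 1 - 2)) := by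
    rw [div_le_div_iff₀ he (by positivity)]
    nlinarith [mul_pos (exp_pos 1) (mul_pos he he)]
  have hν' : exp 1 / (exp 1 - 2) ≤ ν := hthreshold.trans hν
  have hone : 1 ≤ ν := le_trans (by rw [le_div_iff₀ he]; linarith) hν'
  exact besselK_lt_rpow hν' hz (hz'.trans hone)
end

section
/- For every real ν ≥ 1, one has √(2/e) < (Γ(ν)/√π)·(e/ν)^{ν − 1/2} < 1, where Γ denotes the real Gamma function. -/
open Real MeasureTheory

/-!
With `F x = log Γ(x) + (x - 1/2)(1 - log x) - (log π)/2` the middle expression is `exp (F ν)`.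
Since `F x - F (x + 1) = (x + 1/2) log (1 + 1/x) - 1` and the series of `log (1 + 1/x)` starts
with `2 / (2x + 1)`, `F` strictly decreases along `x, x + 1, x + 2, …`. The upper bound thus
reduces to `F < 0` on `[1, 2]`, which follows from the log-convexity of `Γ` through the nodes
`1, 3/2, 2` (where `Γ = 1, √π/2, 1`) and `log x ≥ 2(x - 1)/(x + 1)`. For the lower bound,
log-convexity and Stirling's lower bound for `m!` give `F (x + 1 + m) ≥ (log 2 - 1)/2 - O(1/m)`.
-/

open Filter Topology

lemma two_div_two_mul_add_one_lt_log_one_add_inv {a : ℝ} (ha : 0 < a) :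
    2 / (2 * a + 1) < log (1 + a⁻¹) := by
  have hterm : ∀ k : ℕ, 0 < (2 : ℝ) * (1 / (2 * k + 1)) * (1 / (2 * a + 1)) ^ (2 * k + 1) :=
    fun k => by positivity
  calc 2 / (2 * a + 1)
      = 2 * (1 / (2 * ((0 : ℕ) : ℝ) + 1)) * (1 / (2 * a + 1)) ^ (2 * 0 + 1) := by ring
    _ < log (1 + a⁻¹) :=
      lt_hasSum (hasSum_log_one_add_inv ha) 0 (fun j _ => (hterm j).le) 1 one_ne_zero (hterm 1)

lemma two_mul_sub_one_div_add_one_le_log {x : ℝ} (hx : 1 ≤ x) :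
    2 * (x - 1) / (x + 1) ≤ log x := by
  rcases hx.eq_or_lt with rfl | hx
  · simp
  have h := two_div_two_mul_add_one_lt_log_one_add_inv (inv_pos.2 (sub_pos.2 hx))
  rw [inv_inv, add_sub_cancel] at h
  refine (Eq.trans_lt ?_ h).le
  have : x - 1 ≠ 0 := (sub_pos.2 hx).ne'
  field_simp
  ring

lemma log_Gamma_add_one {x : ℝ} (hx : 0 < x) : log (Gamma (x + 1)) = log (Gamma x) + log x := by
  rw [Gamma_add_one hx.ne', log_mul hx.ne' (Gamma_pos_of_pos hx).ne', add_comm]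

lemma Gamma_three_halves : Gamma (3 / 2) = √π / 2 := by
  rw [show (3 / 2 : ℝ) = 1 / 2 + 1 by norm_num, Gamma_add_one (by norm_num), Gamma_one_half_eq]
  ring

lemma neg_one_sixth_lt_log_Gamma_three_halves : -(1 / 6) < log (Gamma (3 / 2)) := by
  have hsq : Gamma (3 / 2) ^ 2 = π / 4 := by
    rw [Gamma_three_halves, div_pow, sq_sqrt pi_pos.le]
    norm_num
  have h : 2 * log (Gamma (3 / 2)) = log (π / 4) := by
    rw [← hsq, log_pow]
    norm_num
  have hlog := one_sub_inv_le_log_of_pos (x := π / 4) (by positivity)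
  have hinv : (π / 4)⁻¹ < 4 / 3 := by
    rw [inv_div, div_lt_div_iff₀ pi_pos (by norm_num)]
    linarith [pi_gt_three]
  linarith

lemma log_Gamma_le_of_mem_Icc {x : ℝ} (h1 : 1 ≤ x) (h2 : x ≤ 2) :
    log (Gamma x) ≤ (1 - |2 * x - 3|) * log (Gamma (3 / 2)) := by
  have hconv := convexOn_log_Gamma.2
  rcases le_total x (3 / 2) with hx | hx
  · have h := hconv (x := 1) (y := 3 / 2) (by norm_num) (by norm_num) (a := 3 - 2 * x)
      (b := 2 * x - 2) (by linarith) (by linarith) (by ring)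
    rw [abs_of_nonpos (by linarith)]
    simp only [smul_eq_mul, Function.comp_apply, Gamma_one, log_one] at h
    rw [show (3 - 2 * x) * 1 + (2 * x - 2) * (3 / 2) = x by ring] at h
    linarith
  · have h := hconv (x := 3 / 2) (y := 2) (by norm_num) (by norm_num) (a := 4 - 2 * x)
      (b := 2 * x - 3) (by linarith) (by linarith) (by ring)
    rw [abs_of_nonneg (by linarith)]
    simp only [smul_eq_mul, Function.comp_apply, Gamma_two, log_one] at h
    rw [show (4 - 2 * x) * (3 / 2) + (2 * x - 3) * 2 = x by ring] at h
    linarith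

lemma abs_two_mul_sub_three_div_six_add_lt_log_two {x : ℝ} (h1 : 1 ≤ x) (h2 : x ≤ 2) :
    |2 * x - 3| / 6 + (x - 1 / 2) * (3 - x) / (x + 1) < log 2 := by
  have hl : 0.6931471803 * (x + 1) < log 2 * (x + 1) :=
    mul_lt_mul_of_pos_right log_two_gt_d9 (by linarith)
  rw [div_add_div _ _ (by norm_num) (by linarith), div_lt_iff₀ (by positivity)]
  rcases le_total x (3 / 2) with hx | hx
  · rw [abs_of_nonpos (by linarith)]
    nlinarith [sq_nonneg (x - 1.1)]
  · rw [abs_of_nonneg (by linarith)]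
    nlinarith [sq_nonneg (x - 1.7)]

noncomputable def stirlingDefect (x : ℝ) : ℝ :=
  log (Gamma x) + (x - 1 / 2) * (1 - log x) - log π / 2

lemma exp_stirlingDefect {x : ℝ} (hx : 0 < x) :
    exp (stirlingDefect x) = Gamma x / √π * (exp 1 / x) ^ (x - 1 / 2) := by
  rw [stirlingDefect, exp_sub, exp_add, exp_log (Gamma_pos_of_pos hx),
    rpow_def_of_pos (by positivity), log_div (exp_ne_zero 1) hx.ne', log_exp,
    ← log_sqrt pi_pos.le, exp_log (by positivity), mul_comm (x - 1 / 2)]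
  ring

lemma stirlingDefect_add_one_lt {x : ℝ} (hx : 0 < x) :
    stirlingDefect (x + 1) < stirlingDefect x := by
  have hstep := two_div_two_mul_add_one_lt_log_one_add_inv hx
  have hlog : log (1 + x⁻¹) = log (x + 1) - log x := by
    rw [← log_div (by positivity) hx.ne']
    congr 1
    field_simp
  rw [div_lt_iff₀ (by positivity), hlog] at hstep
  rw [stirlingDefect, stirlingDefect, log_Gamma_add_one hx]
  linarith

lemma stirlingDefect_add_nat_le {x : ℝ} (hx : 0 < x) (n : ℕ) :
    stirlingDefect (x + n) ≤ stirlingDefect x := by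
  have : Antitone fun n : ℕ => stirlingDefect (x + n) := antitone_nat_of_succ_le fun n => by
    simpa [add_assoc] using (stirlingDefect_add_one_lt (x := x + n) (by positivity)).le
  simpa using this n.zero_le

lemma stirlingDefect_neg_of_mem_Icc {x : ℝ} (h1 : 1 ≤ x) (h2 : x ≤ 2) :
    stirlingDefect x < 0 := by
  have hπ : log π / 2 = log (Gamma (3 / 2)) + log 2 := by
    rw [Gamma_three_halves, log_div (by positivity) two_ne_zero, log_sqrt pi_pos.le]
    ring
  have hlog : (x - 1 / 2) * (1 - log x) ≤ (x - 1 / 2) * (3 - x) / (x + 1) := by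
    rw [mul_div_assoc]
    refine mul_le_mul_of_nonneg_left ?_ (by linarith)
    have h := two_mul_sub_one_div_add_one_le_log h1
    rw [div_le_iff₀ (by linarith)] at h
    rw [le_div_iff₀ (by linarith)]
    linarith
  -- the chord bound gives `log Γ x - log Γ (3/2) ≤ -|2x - 3| log Γ (3/2) ≤ |2x - 3| / 6`
  have hu := neg_one_sixth_lt_log_Gamma_three_halves
  have hchord := log_Gamma_le_of_mem_Icc h1 h2
  have hnum := abs_two_mul_sub_three_div_six_add_lt_log_two h1 h2
  rw [stirlingDefect, hπ]
  nlinarith [abs_nonneg (2 * x - 3)]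

lemma stirlingDefect_neg {x : ℝ} (hx : 1 ≤ x) : stirlingDefect x < 0 := by
  set n := ⌊x - 1⌋₊
  have hn : (n : ℝ) ≤ x - 1 := Nat.floor_le (by linarith)
  have hn' : x - 1 < n + 1 := Nat.lt_floor_add_one _
  calc stirlingDefect x = stirlingDefect (x - n + n) := by rw [sub_add_cancel]
    _ ≤ stirlingDefect (x - n) := stirlingDefect_add_nat_le (by linarith) n
    _ < 0 := stirlingDefect_neg_of_mem_Icc (by linarith) (by linarith)

lemma log_factorial_add_mul_log_le_log_Gamma {m : ℕ} (hm : m ≠ 0) {x : ℝ} (hx : 0 < x) :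
    log m.factorial + x * log m ≤ log (Gamma (m + 1 + x)) := by
  have := BohrMollerup.f_add_nat_ge convexOn_log_Gamma (fun hy => log_Gamma_add_one hy)
    (n := m + 1) (by omega) hx
  simpa [Gamma_nat_eq_factorial] using this

lemma sub_div_le_stirlingDefect_add_one_add_nat {x : ℝ} (hx : 0 < x) {m : ℕ} (hm : m ≠ 0) :
    (log 2 - 1) / 2 - (x + 1 / 2) * (x + 1) / m ≤ stirlingDefect (x + 1 + m) := by
  have hm' : (0 : ℝ) < m := by positivity
  have hΓ := log_factorial_add_mul_log_le_log_Gamma hm hx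
  have hstirling := Stirling.le_log_factorial_stirling hm
  rw [log_mul two_ne_zero pi_ne_zero] at hstirling
  have hlog : log (m + 1 + x) - log m ≤ (x + 1) / m := by
    rw [← log_div (by positivity) hm'.ne']
    refine (log_le_sub_one_of_pos (by positivity)).trans_eq ?_
    field_simp
    ring
  have hmul := mul_le_mul_of_nonneg_left hlog (by positivity : (0 : ℝ) ≤ x + 1 / 2 + m)
  have hsplit : (x + 1 / 2 + m) * ((x + 1) / m) = (x + 1) + (x + 1 / 2) * (x + 1) / m := by
    field_simp
    ring
  rw [stirlingDefect, show x + 1 + (m : ℝ) = m + 1 + x by ring]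
  linarith

lemma le_stirlingDefect_add_one {x : ℝ} (hx : 0 < x) :
    (log 2 - 1) / 2 ≤ stirlingDefect (x + 1) := by
  have hlim : Tendsto (fun m : ℕ => (log 2 - 1) / 2 - (x + 1 / 2) * (x + 1) / m) atTop
      (𝓝 ((log 2 - 1) / 2)) := by
    simpa using tendsto_const_nhds.sub
      (tendsto_const_div_atTop_nhds_zero_nat ((x + 1 / 2) * (x + 1)))
  refine le_of_tendsto hlim ?_
  filter_upwards [eventually_ne_atTop 0] with m hm
  exact (sub_div_le_stirlingDefect_add_one_add_nat hx hm).trans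
    (stirlingDefect_add_nat_le (by positivity) m)

theorem gamma_bounds (ν : ℝ) (hν : 1 ≤ ν) :
    Real.sqrt (2 / Real.exp 1) <
        (Real.Gamma ν / Real.sqrt π) * (Real.exp 1 / ν) ^ (ν - 1 / 2) ∧
      (Real.Gamma ν / Real.sqrt π) * (Real.exp 1 / ν) ^ (ν - 1 / 2) < 1 := by
  have hν₀ : 0 < ν := by linarith
  have hsqrt : √(2 / exp 1) = exp ((log 2 - 1) / 2) := by
    rw [← exp_log (by positivity : 0 < √(2 / exp 1)), log_sqrt (by positivity),
      log_div two_ne_zero (exp_ne_zero 1), log_exp]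
  rw [← exp_stirlingDefect hν₀, hsqrt, exp_lt_exp, exp_lt_one_iff]
  exact ⟨(le_stirlingDefect_add_one hν₀).trans_lt (stirlingDefect_add_one_lt hν₀),
    stirlingDefect_neg hν⟩
end

section
/- For every real ν ≥ 1, the quantity c₀ := 2·(Γ(ν)/√π)^{2/(2ν−1)} satisfies (2ν/e)·(2/e)^{1/(2ν−1)} < c₀ < 2ν/e, where Γ denotes the real Gamma function. -/
open Real MeasureTheory

/-!
Let `μ(x) = log Γ(x) - ((x - 1/2) log x - x + log √(2π))` be Binet's remainder in Stirling's
formula. Unwinding the definition, `c₀ = (2ν/e) · exp ((2μ(ν) + log 2 - 1) / (2ν - 1))`, so the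
two bounds say `0 < μ(ν) < (1 - log 2) / 2`. Both follow from the classical estimate
`0 < μ(x) ≤ 1/(12x)`: the step `μ(x) - μ(x+1) = (x + 1/2) log (1 + 1/x) - 1` lies in
`(0, 1/(12x) - 1/(12(x+1))]` by the power series of `log ((1+t)/(1-t))` at `t = 1/(2x+1)`, and
`μ(x + n) → 0` by Stirling's formula at the integers together with the log-convexity of `Γ`.
-/

open Filter Topology

namespace Real

noncomputable def stirlingRemainder (x : ℝ) : ℝ :=
  log (Gamma x) - ((x - 1 / 2) * log x - x + log (2 * π) / 2)

theorem log_Gamma_add_one {s : ℝ} (hs : 0 < s) : log (Gamma (s + 1)) = log s + log (Gamma s) := by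
  rw [Gamma_add_one hs.ne', log_mul hs.ne' (Gamma_pos_of_pos hs).ne']

theorem log_one_add_inv {x : ℝ} (hx : 0 < x) : log (1 + x⁻¹) = log (x + 1) - log x := by
  rw [← log_div (by positivity) hx.ne']; congr 1; field_simp

theorem log_add_eq_log_add_log_one_add_div {y c : ℝ} (hy : 0 < y) (hyc : 0 < y + c) :
    log (y + c) = log y + log (1 + c / y) := by
  have h : 1 + c / y = (y + c) / y := by field_simp
  rw [h, log_div hyc.ne' hy.ne']
  ring

theorem hasSum_mul_log_one_add_inv_sub_one {x : ℝ} (hx : 0 < x) :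
    HasSum (fun k : ℕ => ((1 / (2 * x + 1)) ^ 2) ^ (k + 1) / (2 * (k + 1 : ℕ) + 1))
      ((x + 1 / 2) * log (1 + x⁻¹) - 1) := by
  have h := (hasSum_log_one_add_inv hx).mul_left (x + 1 / 2)
  rw [← hasSum_nat_add_iff' 1, Finset.sum_range_one] at h
  have hterm : ∀ k : ℕ, (x + 1 / 2) * (2 * (1 / (2 * ((k + 1 : ℕ) : ℝ) + 1)) *
      (1 / (2 * x + 1)) ^ (2 * (k + 1) + 1)) =
      ((1 / (2 * x + 1)) ^ 2) ^ (k + 1) / (2 * (k + 1 : ℕ) + 1) := fun k => by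
    rw [← pow_mul, pow_succ]; field_simp
  have hzero :
      (x + 1 / 2) * (2 * (1 / (2 * ((0 : ℕ) : ℝ) + 1)) * (1 / (2 * x + 1)) ^ (2 * 0 + 1)) = 1 := by
    norm_num
    field_simp
  simpa only [hterm, hzero] using h

theorem one_lt_mul_log_one_add_inv {x : ℝ} (hx : 0 < x) :
    1 < (x + 1 / 2) * log (1 + x⁻¹) := by
  have h := le_hasSum (hasSum_mul_log_one_add_inv_sub_one hx) 0 (fun _ _ => by positivity)
  have : 0 < ((1 / (2 * x + 1)) ^ 2) ^ (0 + 1) / (2 * ((0 + 1 : ℕ) : ℝ) + 1) := by positivity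
  linarith

theorem mul_log_one_add_inv_le {x : ℝ} (hx : 0 < x) :
    (x + 1 / 2) * log (1 + x⁻¹) - 1 ≤ 1 / (12 * x) - 1 / (12 * (x + 1)) := by
  set r := (1 / (2 * x + 1)) ^ 2 with hr
  have hr1 : 1 - r = 4 * x * (x + 1) / (2 * x + 1) ^ 2 := by rw [hr]; field_simp; ring
  have hr1' : r < 1 := by
    have : 0 < 4 * x * (x + 1) / (2 * x + 1) ^ 2 := by positivity
    linarith
  have hgeom := ((hasSum_geometric_of_lt_one (by positivity) hr1').mul_left r).div_const 3
  refine (hasSum_le (fun k => ?_) (hasSum_mul_log_one_add_inv_sub_one hx) hgeom).trans_eq ?_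
  · rw [pow_succ', div_le_div_iff_of_pos_left (by positivity) (by positivity) (by norm_num)]
    push_cast
    linarith [(k.cast_nonneg : (0 : ℝ) ≤ k)]
  · rw [hr1, hr]; field_simp; ring

theorem stirlingRemainder_sub_add_one {x : ℝ} (hx : 0 < x) :
    stirlingRemainder x - stirlingRemainder (x + 1) = (x + 1 / 2) * log (1 + x⁻¹) - 1 := by
  rw [stirlingRemainder, stirlingRemainder, log_Gamma_add_one hx, log_one_add_inv hx]
  ring

theorem stirlingRemainder_add_one_lt {x : ℝ} (hx : 0 < x) :
    stirlingRemainder (x + 1) < stirlingRemainder x := by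
  linarith [stirlingRemainder_sub_add_one hx, one_lt_mul_log_one_add_inv hx]

theorem stirlingRemainder_sub_add_one_le {x : ℝ} (hx : 0 < x) :
    stirlingRemainder x - stirlingRemainder (x + 1) ≤ 1 / (12 * x) - 1 / (12 * (x + 1)) := by
  rw [stirlingRemainder_sub_add_one hx]
  exact mul_log_one_add_inv_le hx

theorem log_Gamma_add_sub_le {y x : ℝ} (hy : 0 < y) (hx : 0 < x) :
    log (Gamma (y + x)) - log (Gamma y) ≤ x * log (y + x) := by
  have h := convexOn_log_Gamma.slope_mono_adjacent (Set.mem_Ioi.2 hy)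
    (Set.mem_Ioi.2 (by linarith : 0 < y + x + 1)) (by linarith : y < y + x) (by linarith)
  simp only [Function.comp_apply, log_Gamma_add_one (by linarith : 0 < y + x)] at h
  rwa [add_sub_cancel_left, add_sub_cancel_left, add_sub_cancel_right, div_one,
    div_le_iff₀ hx, mul_comm] at h

theorem mul_log_sub_one_le_log_Gamma_add_sub {y x : ℝ} (hy : 1 < y) (hx : 0 < x) :
    x * log (y - 1) ≤ log (Gamma (y + x)) - log (Gamma y) := by
  have h := convexOn_log_Gamma.slope_mono_adjacent (Set.mem_Ioi.2 (by linarith : 0 < y - 1))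
    (Set.mem_Ioi.2 (by linarith : 0 < y + x)) (by linarith : y - 1 < y) (by linarith)
  have hy' : log (Gamma y) = log (y - 1) + log (Gamma (y - 1)) := by
    simpa using log_Gamma_add_one (by linarith : 0 < y - 1)
  simp only [Function.comp_apply, hy'] at h
  rw [sub_sub_cancel, add_sub_cancel_left, div_one, le_div_iff₀ hx, mul_comm,
    add_sub_cancel_right] at h
  rwa [hy']

theorem tendsto_log_one_add_div_atTop (c : ℝ) :
    Tendsto (fun u => log (1 + c / u)) atTop (𝓝 0) := by
  simpa using ((tendsto_const_nhds.div_atTop tendsto_id).const_add 1).log (by norm_num)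

theorem tendsto_add_mul_log_one_add_div_atTop (a c : ℝ) :
    Tendsto (fun u => (u + a) * log (1 + c / u)) atTop (𝓝 c) := by
  simpa [add_mul] using
    (tendsto_mul_log_one_add_div_atTop c).add ((tendsto_log_one_add_div_atTop c).const_mul a)

theorem tendsto_stirlingRemainder_add_sub {x : ℝ} (hx : 0 < x) :
    Tendsto (fun y => stirlingRemainder (y + x) - stirlingRemainder y) atTop (𝓝 0) := by
  have hlower : Tendsto
      (fun y => x + x * log (1 + (-1) / y) - (y + (x - 1 / 2)) * log (1 + x / y))
      atTop (𝓝 0) := by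
    simpa using (((tendsto_log_one_add_div_atTop (-1)).const_mul x).const_add x).sub
      (tendsto_add_mul_log_one_add_div_atTop _ x)
  have hupper : Tendsto (fun y => x - (y + (-1 / 2)) * log (1 + x / y)) atTop (𝓝 0) := by
    simpa using (tendsto_add_mul_log_one_add_div_atTop _ x).const_sub x
  refine tendsto_of_tendsto_of_tendsto_of_le_of_le' hlower hupper ?_ ?_ <;>
    filter_upwards [eventually_gt_atTop 1] with y hy
  · have h := mul_log_sub_one_le_log_Gamma_add_sub hy hx
    rw [sub_eq_add_neg y 1, log_add_eq_log_add_log_one_add_div (by linarith) (by linarith)] at h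
    simp only [stirlingRemainder, log_add_eq_log_add_log_one_add_div (by linarith : 0 < y)
      (by linarith : 0 < y + x)]
    linarith
  · have h := log_Gamma_add_sub_le (by linarith : 0 < y) hx
    rw [log_add_eq_log_add_log_one_add_div (by linarith) (by linarith)] at h
    simp only [stirlingRemainder, log_add_eq_log_add_log_one_add_div (by linarith : 0 < y)
      (by linarith : 0 < y + x)]
    linarith

theorem tendsto_stirlingRemainder_natCast :
    Tendsto (fun n : ℕ => stirlingRemainder n) atTop (𝓝 0) := by
  rw [← tendsto_add_atTop_iff_nat 1]
  have hs := (continuousAt_log (sqrt_pos.2 pi_pos).ne').tendsto.comp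
    Stirling.tendsto_stirlingSeq_sqrt_pi
  have hlim := (hs.sub_const (log (sqrt π))).sub
    (((tendsto_add_mul_log_one_add_div_atTop (1 / 2) 1).comp
      tendsto_natCast_atTop_atTop).sub_const 1)
  rw [sub_self, sub_self, sub_zero] at hlim
  refine hlim.congr' ?_
  filter_upwards [eventually_ge_atTop 1] with n hn
  have hn' : (0 : ℝ) < n := by exact_mod_cast hn
  have hfact := Stirling.log_stirlingSeq_formula n
  have h1 : log (1 + 1 / (n : ℝ)) = log (n + 1) - log n := by rw [one_div, log_one_add_inv hn']
  rw [log_mul two_ne_zero hn'.ne', log_div hn'.ne' (exp_pos 1).ne', log_exp] at hfact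
  simp only [Function.comp_apply, stirlingRemainder, Nat.cast_add_one, Gamma_nat_eq_factorial,
    log_mul two_ne_zero pi_ne_zero, log_sqrt pi_pos.le, h1]
  linear_combination hfact

theorem tendsto_stirlingRemainder_add_natCast {x : ℝ} (hx : 0 < x) :
    Tendsto (fun n : ℕ => stirlingRemainder (x + n)) atTop (𝓝 0) := by
  have h := tendsto_stirlingRemainder_natCast.add
    ((tendsto_stirlingRemainder_add_sub hx).comp tendsto_natCast_atTop_atTop)
  simpa [add_comm] using h

theorem stirlingRemainder_pos {x : ℝ} (hx : 0 < x) : 0 < stirlingRemainder x := by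
  have hanti : Antitone fun n : ℕ => stirlingRemainder (x + 1 + n) :=
    antitone_nat_of_succ_le fun n => by
      simpa [← add_assoc] using (stirlingRemainder_add_one_lt (by positivity : 0 < x + 1 + n)).le
  have h := hanti.le_of_tendsto (tendsto_stirlingRemainder_add_natCast (by positivity)) 0
  rw [Nat.cast_zero, add_zero] at h
  exact h.trans_lt (stirlingRemainder_add_one_lt hx)

theorem stirlingRemainder_le {x : ℝ} (hx : 0 < x) : stirlingRemainder x ≤ 1 / (12 * x) := by
  have hmono : Monotone fun n : ℕ => stirlingRemainder (x + n) - 1 / (12 * (x + n)) :=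
    monotone_nat_of_le_succ fun n => by
      have := stirlingRemainder_sub_add_one_le (by positivity : 0 < x + n)
      rw [Nat.cast_succ, ← add_assoc]
      linarith
  have hlim : Tendsto (fun n : ℕ => stirlingRemainder (x + n) - 1 / (12 * (x + n)))
      atTop (𝓝 0) := by
    simpa using (tendsto_stirlingRemainder_add_natCast hx).sub
      ((tendsto_const_nhds (x := 1)).div_atTop
        ((tendsto_atTop_add_const_left _ x tendsto_natCast_atTop_atTop).const_mul_atTop
          (by norm_num : (0 : ℝ) < 12)))
  simpa using hmono.ge_of_tendsto hlim 0

theorem two_mul_Gamma_div_sqrt_pi_rpow {ν : ℝ} (hν : 1 / 2 < ν) :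
    2 * (Gamma ν / sqrt π) ^ (2 / (2 * ν - 1)) =
      2 * ν / exp 1 * exp ((2 * stirlingRemainder ν + log 2 - 1) / (2 * ν - 1)) := by
  have hν0 : 0 < ν := by linarith
  have hs : 2 * ν - 1 ≠ 0 := by linarith
  rw [rpow_def_of_pos (div_pos (Gamma_pos_of_pos hν0) (sqrt_pos.2 pi_pos)),
    show 2 * ν / exp 1 = 2 * exp (log ν - 1) by rw [exp_sub, exp_log hν0]; ring,
    mul_assoc, ← exp_add, stirlingRemainder,
    log_div (Gamma_pos_of_pos hν0).ne' (sqrt_pos.2 pi_pos).ne', log_sqrt pi_pos.le,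
    log_mul two_ne_zero pi_ne_zero]
  congr 2
  field_simp
  ring

end Real

theorem c0_bounds (ν : ℝ) (hν : 1 ≤ ν)
    (c₀ : ℝ) (hc₀ : c₀ = 2 * (Real.Gamma ν / Real.sqrt π) ^ (2 / (2 * ν - 1))) :
    (2 * ν / Real.exp 1) * (2 / Real.exp 1) ^ (1 / (2 * ν - 1)) < c₀ ∧
      c₀ < 2 * ν / Real.exp 1 := by
  have hν0 : 0 < ν := by linarith
  have hs : 0 < 2 * ν - 1 := by linarith
  have hμ_pos := stirlingRemainder_pos hν0
  have hμ_le : stirlingRemainder ν ≤ 1 / 12 :=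
    (stirlingRemainder_le hν0).trans (by gcongr; linarith)
  rw [hc₀, two_mul_Gamma_div_sqrt_pi_rpow (by linarith), rpow_def_of_pos (by positivity),
    log_div two_ne_zero (exp_pos 1).ne', log_exp, mul_one_div]
  constructor
  · gcongr
    linarith
  · refine mul_lt_of_lt_one_right (by positivity) (exp_lt_one_iff.2 (div_neg_of_neg_of_pos ?_ hs))
    linarith [log_two_lt_d9]
end

section
/- Let c > 0 be a real number and define f : ℝ² → ℝ² by f(x, y) = (y + log(1 + c·e^{x−y}), x). Then f is 1-Lipschitz with respect to the supremum norm: for all (x₁, y₁), (x₂, y₂) ∈ ℝ², max(|f(x₁,y₁)₁ − f(x₂,y₂)₁|, |f(x₁,y₁)₂ − f(x₂,y₂)₂|) ≤ max(|x₁ − x₂|, |y₁ − y₂|). (This is the stability of the forward recursion for log K_ν: the one-step map has condition number at most 1 in the infinity norm.) -/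
open Real MeasureTheory

lemma aux_rewrite (c x y : ℝ) (hc : 0 < c) :
    y + Real.log (1 + c * Real.exp (x - y)) = Real.log (Real.exp y + c * Real.exp x) := by
  have h1 : (0:ℝ) < 1 + c * Real.exp (x - y) := by positivity
  have : Real.exp y + c * Real.exp x = Real.exp y * (1 + c * Real.exp (x - y)) := by
    rw [mul_add, mul_one, Real.exp_sub]
    field_simp
  rw [this, Real.log_mul (Real.exp_ne_zero y) (ne_of_gt h1), Real.log_exp]

lemma aux_half (c x₁ y₁ x₂ y₂ M : ℝ) (hc : 0 < c)
    (hx : x₁ - x₂ ≤ M) (hy : y₁ - y₂ ≤ M) :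
    Real.log (Real.exp y₁ + c * Real.exp x₁) - Real.log (Real.exp y₂ + c * Real.exp x₂) ≤ M := by
  have hS₂ : (0:ℝ) < Real.exp y₂ + c * Real.exp x₂ := by positivity
  have hle : Real.exp y₁ + c * Real.exp x₁ ≤ Real.exp M * (Real.exp y₂ + c * Real.exp x₂) := by
    have h1 : Real.exp y₁ ≤ Real.exp M * Real.exp y₂ := by
      rw [← Real.exp_add]; exact Real.exp_le_exp.2 (by linarith)
    have h2 : Real.exp x₁ ≤ Real.exp M * Real.exp x₂ := by
      rw [← Real.exp_add]; exact Real.exp_le_exp.2 (by linarith)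
    nlinarith [hc.le, Real.exp_pos x₂]
  have : Real.log (Real.exp y₁ + c * Real.exp x₁)
      ≤ M + Real.log (Real.exp y₂ + c * Real.exp x₂) := by
    have := Real.log_le_log (show (0:ℝ) < Real.exp y₁ + c * Real.exp x₁ by positivity) hle
    rwa [Real.log_mul (Real.exp_ne_zero M) (ne_of_gt hS₂), Real.log_exp] at this
  linarith

theorem recursion_map_lipschitz (c : ℝ) (hc : 0 < c)
    (f : ℝ × ℝ → ℝ × ℝ)
    (hf : ∀ p : ℝ × ℝ, f p = (p.2 + Real.log (1 + c * Real.exp (p.1 - p.2)), p.1)) :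
    ∀ x₁ y₁ x₂ y₂ : ℝ,
      max |(f (x₁, y₁)).1 - (f (x₂, y₂)).1| |(f (x₁, y₁)).2 - (f (x₂, y₂)).2| ≤
        max |x₁ - x₂| |y₁ - y₂| := by
  intro x₁ y₁ x₂ y₂
  rw [hf (x₁, y₁), hf (x₂, y₂)]
  simp only
  set M := max |x₁ - x₂| |y₁ - y₂| with hM
  have hx : |x₁ - x₂| ≤ M := le_max_left _ _
  have hy : |y₁ - y₂| ≤ M := le_max_right _ _
  rw [max_le_iff]
  constructor
  · rw [aux_rewrite c x₁ y₁ hc, aux_rewrite c x₂ y₂ hc, abs_sub_le_iff]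
    constructor
    · exact aux_half c x₁ y₁ x₂ y₂ M hc (le_trans (le_abs_self _) hx)
        (le_trans (le_abs_self _) hy)
    · exact aux_half c x₂ y₂ x₁ y₁ M hc
        (by rw [← neg_sub]; exact le_trans (neg_le_abs _) hx)
        (by rw [← neg_sub]; exact le_trans (neg_le_abs _) hy)
  · exact hx
end
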